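/- arXiv:2006.04375 — 3 statements merged into one kernel-verified Lean document; each statement's English description precedes it below -/
import Mathlib

section
/- Dependence of the minimal divergence on constant shifts of the forcing: Let σ be an anisotropy on ℝⁿ, let ψ be a Lipschitz function on the torus 𝕋ⁿ = ℝⁿ/ℤⁿ with CH(ψ;𝕋ⁿ) ≠ ∅, and let f ∈ L²(𝕋ⁿ). Then for every constant c ∈ ℝ, Λ_{f+c}[ψ] = Λ_f[ψ] − c a.e. on {ψ = 0}. -/
/-!
Every divergence `w` of a Cahn–Hoffman field on the torus has mean zero (test against `φ ≡ 1`),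
so `‖w - (f + c)‖² = ‖w - f‖² + 2c ∫ f + c² |cube|` differs from `‖w - f‖²` by a constant:
minimal pairs for `f` and for `f + c` minimize the same functional. The admissible divergences
form a convex set and the functional is strictly convex (Apollonius' identity), so the two
minimal divergences agree a.e. on the cube, hence everywhere by periodicity. Since
`Λ_f[ψ] = w - f`, this is the claim.
-/

open MeasureTheory Set Filter Metric
open scoped RealInnerProductSpace ENNReal Topology NNReal

noncomputable section

namespace Paper

abbrev E (n : ℕ) := EuclideanSpace ℝ (Fin n)

def subdiff {k : ℕ} (ρ : E k → ℝ) (p : E k) : Set (E k) :=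
  {z | ∀ q, ρ p + ⟪z, q - p⟫ ≤ ρ q}

def PosHom {k : ℕ} (ρ : E k → ℝ) : Prop :=
  ∀ c : ℝ, 0 < c → ∀ x, ρ (c • x) = c * ρ x

structure IsAnisotropy {k : ℕ} (ρ : E k → ℝ) : Prop where
  convex : ConvexOn ℝ Set.univ ρ
  homog : PosHom ρ
  bounded : Bornology.IsBounded {x | ρ x < 1}
  zero_mem : ρ 0 < 1

/-- `ℤⁿ`-periodicity: a function of `x ∈ ℝⁿ` that models a function on the torus
`𝕋ⁿ = ℝⁿ/ℤⁿ`. -/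
def ZPeriodic {n : ℕ} {α : Type*} (ψ : E n → α) : Prop :=
  ∀ (x : E n) (k : Fin n → ℤ), ψ (x + (WithLp.equiv 2 (Fin n → ℝ)).symm fun i => (k i : ℝ)) = ψ x

/-- The fundamental cube `[0,1)ⁿ` of the torus. -/
def cube (n : ℕ) : Set (E n) := {x | ∀ i, x i ∈ Set.Ico (0:ℝ) 1}

/-- Cahn-Hoffman vector field on the torus, with distributional divergence `w`. -/
def IsTorusCH {n : ℕ} (σ : E n → ℝ) (ψ : E n → ℝ) (z : E n → E n) (w : E n → ℝ) : Prop :=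
  ZPeriodic z ∧ ZPeriodic w ∧
  MemLp z ⊤ (volume.restrict (cube n)) ∧
  MemLp w 2 (volume.restrict (cube n)) ∧
  (∀ φ : E n → ℝ, ContDiff ℝ 1 φ → ZPeriodic φ →
    ∫ x in cube n, w x * φ x = - ∫ x in cube n, ⟪z x, gradient φ x⟫) ∧
  (∀ᵐ x ∂(volume : Measure (E n)), z x ∈ subdiff σ (gradient ψ x))

/-- Minimal Cahn-Hoffman pair on the torus for the forcing `f`. -/
def IsMinimalTorusCH {n : ℕ} (σ : E n → ℝ) (ψ : E n → ℝ) (f : E n → ℝ)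
    (z : E n → E n) (w : E n → ℝ) : Prop :=
  IsTorusCH σ ψ z w ∧
  ∀ z' w', IsTorusCH σ ψ z' w' →
    (∫ x in cube n, (w x - f x) ^ 2) ≤ ∫ x in cube n, (w' x - f x) ^ 2

theorem _root_.ContDiff.continuous_gradient {F : Type*} [NormedAddCommGroup F]
    [InnerProductSpace ℝ F] [CompleteSpace F] {φ : F → ℝ} (hφ : ContDiff ℝ 1 φ) :
    Continuous (gradient φ) :=
  (InnerProductSpace.toDual ℝ F).symm.continuous.comp (hφ.continuous_fderiv one_ne_zero)

theorem _root_.MeasureTheory.Integrable.inner_of_top_right {α F : Type*} [MeasurableSpace α]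
    {μ : Measure α} [NormedAddCommGroup F] [InnerProductSpace ℝ F] {u v : α → F}
    (hv : Integrable v μ) (hu : MemLp u ∞ μ) : Integrable (fun x => ⟪u x, v x⟫) μ :=
  memLp_one_iff_integrable.1 <| hu.of_bilin (fun a b => ⟪a, b⟫) 1 (memLp_one_iff_integrable.2 hv)
    (hu.1.inner hv.1) (ae_of_all _ fun x => by simpa using nnnorm_inner_le_nnnorm (u x) (v x))

theorem integral_sub_const_sq {α : Type*} [MeasurableSpace α] {μ : Measure α} [IsFiniteMeasure μ]
    {g : α → ℝ} (hg : MemLp g 2 μ) (c : ℝ) :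
    ∫ x, (g x - c) ^ 2 ∂μ = ∫ x, g x ^ 2 ∂μ - 2 * c * ∫ x, g x ∂μ + μ.real univ * c ^ 2 := by
  have hg1 : Integrable (fun x => 2 * c * g x) μ := (hg.integrable one_le_two).const_mul _
  have hg2 : Integrable (fun x => g x ^ 2 - 2 * c * g x) μ := hg.integrable_sq.sub hg1
  calc ∫ x, (g x - c) ^ 2 ∂μ = ∫ x, (g x ^ 2 - 2 * c * g x + c ^ 2) ∂μ := by
        congr with x; ring
    _ = _ := by
        rw [integral_add hg2 (integrable_const _), integral_sub hg.integrable_sq hg1,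
          integral_const_mul, integral_const, smul_eq_mul]

theorem integral_sq_midpoint_sub_add {α : Type*} [MeasurableSpace α] {μ : Measure α}
    {f g h : α → ℝ} (hf : MemLp f 2 μ) (hg : MemLp g 2 μ) (hh : MemLp h 2 μ) :
    ∫ x, ((g x + h x) / 2 - f x) ^ 2 ∂μ + (∫ x, (g x - h x) ^ 2 ∂μ) / 4
      = (∫ x, (g x - f x) ^ 2 ∂μ + ∫ x, (h x - f x) ^ 2 ∂μ) / 2 := by
  have hmid : Integrable (fun x => ((g x + h x) / 2 - f x) ^ 2) μ :=
    (((hg.add hh).const_mul 2⁻¹).sub hf).integrable_sq.congr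
      (ae_of_all _ fun x => by simp only [Pi.sub_apply, Pi.add_apply]; ring)
  have hdiff : Integrable (fun x => (g x - h x) ^ 2 / 4) μ := (hg.sub hh).integrable_sq.div_const 4
  have hgf : Integrable (fun x => (g x - f x) ^ 2) μ := (hg.sub hf).integrable_sq
  have hhf : Integrable (fun x => (h x - f x) ^ 2) μ := (hh.sub hf).integrable_sq
  rw [← integral_div, ← integral_add hmid hdiff, ← integral_add hgf hhf, ← integral_div]
  congr with x
  ring

theorem convex_subdiff {k : ℕ} (ρ : E k → ℝ) (p : E k) : Convex ℝ (subdiff ρ p) := by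
  intro z₁ h₁ z₂ h₂ a b ha hb hab q
  rw [inner_add_left, real_inner_smul_left, real_inner_smul_left]
  linear_combination a * h₁ q + b * h₂ q + (ρ q - ρ p) * hab

theorem cube_subset_toLp_Icc (n : ℕ) : cube n ⊆ WithLp.toLp 2 '' Icc (0 : Fin n → ℝ) 1 :=
  fun x hx => ⟨WithLp.ofLp x, ⟨fun i => (hx i).1, fun i => (hx i).2.le⟩, rfl⟩

theorem isCompact_toLp_Icc (n : ℕ) : IsCompact (WithLp.toLp 2 '' Icc (0 : Fin n → ℝ) 1) :=
  isCompact_Icc.image (PiLp.continuous_toLp 2 _)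

theorem measurableSet_cube (n : ℕ) : MeasurableSet (cube n) := by
  rw [cube, ofPred_forall]
  exact .iInter fun i => measurableSet_Ico.preimage (EuclideanSpace.proj i).continuous.measurable

instance isFiniteMeasure_restrict_cube (n : ℕ) :
    IsFiniteMeasure ((volume : Measure (E n)).restrict (cube n)) :=
  isFiniteMeasure_restrict.2
    ((measure_mono (cube_subset_toLp_Icc n)).trans_lt (isCompact_toLp_Icc n).measure_lt_top).ne

theorem memLp_top_cube_of_continuous {n : ℕ} {F : Type*} [NormedAddCommGroup F] {g : E n → F}
    (hg : Continuous g) : MemLp g ∞ ((volume : Measure (E n)).restrict (cube n)) := by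
  obtain ⟨C, hC⟩ := (isCompact_toLp_Icc n).exists_bound_of_continuousOn hg.continuousOn
  exact memLp_top_of_bound hg.aestronglyMeasurable C
    (ae_restrict_of_forall_mem (measurableSet_cube n) fun x hx => hC x (cube_subset_toLp_Icc n hx))

theorem exists_int_translate_mem_cube {n : ℕ} (x : E n) :
    ∃ k : Fin n → ℤ, x + (WithLp.equiv 2 (Fin n → ℝ)).symm (fun i => (k i : ℝ)) ∈ cube n := by
  refine ⟨fun i => -⌊x i⌋, fun i => ?_⟩
  have hx : (x + (WithLp.equiv 2 (Fin n → ℝ)).symm fun j => ((-⌊x j⌋ : ℤ) : ℝ)) i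
      = Int.fract (x i) := by
    simp [Int.fract, sub_eq_add_neg]
  rw [hx]
  exact ⟨Int.fract_nonneg _, Int.fract_lt_one _⟩

theorem ZPeriodic.ae_eq_of_ae_restrict_cube {n : ℕ} {α : Type*} {g g' : E n → α}
    (hg : ZPeriodic g) (hg' : ZPeriodic g')
    (h : g =ᵐ[(volume : Measure (E n)).restrict (cube n)] g') : g =ᵐ[volume] g' := by
  set D := {x | g x ≠ g' x}
  have hcube : volume (D ∩ cube n) = 0 := by
    rwa [Filter.EventuallyEq, ae_iff, Measure.restrict_apply' (measurableSet_cube n)] at h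
  have hcover : D ⊆ ⋃ k : Fin n → ℤ,
      (· + (WithLp.equiv 2 (Fin n → ℝ)).symm fun i => (k i : ℝ)) ⁻¹' (D ∩ cube n) := by
    intro x hx
    obtain ⟨k, hk⟩ := exists_int_translate_mem_cube x
    exact mem_iUnion.2 ⟨k, ⟨by simpa only [D, mem_ofPred_eq, hg x k, hg' x k] using hx, hk⟩⟩
  exact measure_mono_null hcover
    (measure_iUnion_null fun k => (measure_preimage_add_right _ _ _).trans hcube)

section CahnHoffman

variable {n : ℕ} {σ ψ f : E n → ℝ} {z z' : E n → E n} {w w' : E n → ℝ}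

theorem IsTorusCH.integral_eq_zero (h : IsTorusCH σ ψ z w) : ∫ x in cube n, w x = 0 := by
  simpa using h.2.2.2.2.1 (fun _ => 1) contDiff_const fun _ _ => rfl

theorem IsTorusCH.convex_comb (h : IsTorusCH σ ψ z w) (h' : IsTorusCH σ ψ z' w')
    {a b : ℝ} (ha : 0 ≤ a) (hb : 0 ≤ b) (hab : a + b = 1) :
    IsTorusCH σ ψ (fun x => a • z x + b • z' x) (fun x => a * w x + b * w' x) := by
  obtain ⟨hzper, hwper, hz, hw, hdiv, hsub⟩ := h
  obtain ⟨hz'per, hw'per, hz', hw', hdiv', hsub'⟩ := h'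
  refine ⟨fun x k => by simp only [hzper x k, hz'per x k],
    fun x k => by simp only [hwper x k, hw'per x k], (hz.const_smul a).add (hz'.const_smul b),
    (hw.const_mul a).add (hw'.const_mul b), fun φ hφ hφper => ?_,
    by filter_upwards [hsub, hsub'] with x h₁ h₂ using convex_subdiff σ _ h₁ h₂ ha hb hab⟩
  have hφtop : MemLp φ ∞ (volume.restrict (cube n)) := memLp_top_cube_of_continuous hφ.continuous
  have hgrad : Integrable (gradient φ) (volume.restrict (cube n)) :=
    (memLp_top_cube_of_continuous hφ.continuous_gradient).integrable le_top
  have hwφ : Integrable (fun x => w x * φ x) (volume.restrict (cube n)) :=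
    (hw.integrable one_le_two).mul_of_top_left hφtop
  have hw'φ : Integrable (fun x => w' x * φ x) (volume.restrict (cube n)) :=
    (hw'.integrable one_le_two).mul_of_top_left hφtop
  have hdiv_comb : ∫ x in cube n, (a * w x + b * w' x) * φ x
      = a * (∫ x in cube n, w x * φ x) + b * ∫ x in cube n, w' x * φ x := by
    simp_rw [add_mul, mul_assoc]
    rw [integral_add (hwφ.const_mul a) (hw'φ.const_mul b), integral_const_mul, integral_const_mul]
  have hinner_comb : ∫ x in cube n, ⟪a • z x + b • z' x, gradient φ x⟫
      = a * (∫ x in cube n, ⟪z x, gradient φ x⟫) + b * ∫ x in cube n, ⟪z' x, gradient φ x⟫ := by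
    simp_rw [inner_add_left, real_inner_smul_left]
    rw [integral_add ((hgrad.inner_of_top_right hz).const_mul a)
      ((hgrad.inner_of_top_right hz').const_mul b), integral_const_mul, integral_const_mul]
  rw [hdiv_comb, hinner_comb, hdiv φ hφ hφper, hdiv' φ hφ hφper]
  ring

theorem IsTorusCH.integral_sq_sub_add_const (h : IsTorusCH σ ψ z w)
    (hf : MemLp f 2 (volume.restrict (cube n))) (c : ℝ) :
    ∫ x in cube n, (w x - (f x + c)) ^ 2 = (∫ x in cube n, (w x - f x) ^ 2)
      + 2 * c * (∫ x in cube n, f x) + (volume.restrict (cube n)).real univ * c ^ 2 := by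
  have hw : MemLp w 2 (volume.restrict (cube n)) := h.2.2.2.1
  have hmean : ∫ x in cube n, (w x - f x) = -∫ x in cube n, f x := by
    rw [integral_sub (hw.integrable one_le_two) (hf.integrable one_le_two), h.integral_eq_zero,
      zero_sub]
  calc ∫ x in cube n, (w x - (f x + c)) ^ 2 = ∫ x in cube n, ((w x - f x) - c) ^ 2 := by
        congr with x; ring
    _ = _ := by rw [integral_sub_const_sq (g := fun x => w x - f x) (hw.sub hf), hmean]; ring

theorem IsMinimalTorusCH.of_add_const (hf : MemLp f 2 (volume.restrict (cube n))) {c : ℝ}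
    (h : IsMinimalTorusCH σ ψ (fun x => f x + c) z w) : IsMinimalTorusCH σ ψ f z w := by
  refine ⟨h.1, fun z' w' h' => ?_⟩
  have hle := h.2 z' w' h'
  rw [h.1.integral_sq_sub_add_const hf, h'.integral_sq_sub_add_const hf] at hle
  linarith

theorem IsMinimalTorusCH.ae_eq (h : IsMinimalTorusCH σ ψ f z w) (h' : IsMinimalTorusCH σ ψ f z' w')
    (hf : MemLp f 2 (volume.restrict (cube n))) :
    w =ᵐ[volume.restrict (cube n)] w' := by
  have hw : MemLp w 2 (volume.restrict (cube n)) := h.1.2.2.2.1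
  have hw' : MemLp w' 2 (volume.restrict (cube n)) := h'.1.2.2.2.1
  have hmid := h.2 _ _ (h.1.convex_comb h'.1 (a := 1 / 2) (b := 1 / 2) (by norm_num) (by norm_num)
    (by norm_num))
  have hmid_eq : ∫ x in cube n, (1 / 2 * w x + 1 / 2 * w' x - f x) ^ 2
      = ∫ x in cube n, ((w x + w' x) / 2 - f x) ^ 2 := by
    congr with x; ring
  have hdiff : Integrable (fun x => (w x - w' x) ^ 2) (volume.restrict (cube n)) :=
    (hw.sub hw').integrable_sq
  have hzero : ∫ x in cube n, (w x - w' x) ^ 2 = 0 := by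
    have hapollonius := integral_sq_midpoint_sub_add hf hw hw'
    have hle := h'.2 _ _ h.1
    refine le_antisymm ?_ (integral_nonneg fun x => sq_nonneg _)
    linarith
  filter_upwards [(integral_eq_zero_iff_of_nonneg (fun x => sq_nonneg _) hdiff).1 hzero]
    with x hx
  simpa [sub_eq_zero] using hx

end CahnHoffman

theorem minimal_divergence_constant_shift_general
    {n : ℕ} (σ : E n → ℝ)
    (ψ : E n → ℝ)
    (f : E n → ℝ) (hfL2 : MemLp f 2 (volume.restrict (cube n)))
    (c : ℝ)
    (z : E n → E n) (w : E n → ℝ) (z' : E n → E n) (w' : E n → ℝ)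
    (hmin : IsMinimalTorusCH σ ψ f z w)
    (hmin' : IsMinimalTorusCH σ ψ (fun x => f x + c) z' w') :
    ∀ᵐ x ∂(volume : Measure (E n)),
      ψ x = 0 → w' x - (f x + c) = (w x - f x) - c := by
  have hcube : w =ᵐ[volume.restrict (cube n)] w' := hmin.ae_eq (hmin'.of_add_const hfL2) hfL2
  have hall : w =ᵐ[volume] w' := ZPeriodic.ae_eq_of_ae_restrict_cube hmin.1.2.1 hmin'.1.2.1 hcube
  filter_upwards [hall] with x hx _
  rw [hx]
  ring

/-- Lemma 2.2 of the paper: dependence of the minimal divergence on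
constant shifts of the forcing.  Here `(z, w)` is a minimal Cahn-Hoffman pair for `f`
and `(z', w')` one for `f + c`, so that `Λ_f[ψ] = w - f` and `Λ_{f+c}[ψ] = w' - (f + c)`
on `{ψ = 0}`. -/
theorem minimal_divergence_constant_shift
    {n : ℕ} (hn : 1 ≤ n) (σ : E n → ℝ) (hσ : IsAnisotropy σ)
    (ψ : E n → ℝ) (hψper : ZPeriodic ψ) (hψlip : ∃ C : ℝ≥0, LipschitzWith C ψ)
    (f : E n → ℝ) (hfper : ZPeriodic f) (hfL2 : MemLp f 2 (volume.restrict (cube n)))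
    (c : ℝ)
    (z : E n → E n) (w : E n → ℝ) (z' : E n → E n) (w' : E n → ℝ)
    (hmin : IsMinimalTorusCH σ ψ f z w)
    (hmin' : IsMinimalTorusCH σ ψ (fun x => f x + c) z' w') :
    ∀ᵐ x ∂(volume : Measure (E n)),
      ψ x = 0 → w' x - (f x + c) = (w x - f x) - c :=
  minimal_divergence_constant_shift_general σ ψ f hfL2 c z w z' w' hmin hmin'

end Paper
end
end

section
/- Doubling-variable estimates with shifted penalization: Let n ≥ 1, T > 0, and write Q := ℝⁿ × [0,T). Let u : ℝⁿ × [0,T) → ℝ be upper semicontinuous and bounded, and let v : ℝⁿ × [0,T) → ℝ be continuous and bounded. Suppose there exist R > 0 and constants a ≤ b such that u ≡ a and v ≡ b on (ℝⁿ \ B_R(0)) × [0,T), and that u(·,0) ≤ v(·,0) on ℝⁿ. Fix μ > 0 such that m₀ := sup_{(x,t) ∈ Q} [u(x,t) − v(x,t) − μ/(T−t)] > 0. For ζ ∈ ℝⁿ and ε > 0 define Ψ_{ζ,ε}(x,t,y,s) := u(x,t) − v(y,s) − |x−y−ζ|²/(2ε) − |t−s|²/(2ε) − μ/(T−t). Suppose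 that for each sufficiently small ε > 0 a vector ζ_ε with |ζ_ε| ≤ √(m₀ ε) and a global maximum point (x_ε, t_ε, y_ε, s_ε) of Ψ_{ζ_ε,ε} on Q × Q are given. Then there is a constant M, independent of ε, such that |x_ε − y_ε − ζ_ε| ≤ √(Mε) and |t_ε − s_ε| ≤ √(Mε) for all such ε; moreover |x_ε − y_ε − ζ_ε|²/ε → 0 as ε → 0+. -/
/-!
Comparing the maximum of `Ψ` with its value at `(0, 0, 0, 0)` bounds the sum of the three
penalties at the maximum point by a constant `D` independent of `ε` (`u` is bounded above, `v`
below, and `|ζ_ε|² / (2ε) ≤ m₀ / 2`). This gives the `√(Mε)` bounds with `M = 2D`, and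
`μ / (T - t_ε) ≤ D` keeps `t_ε`, and for small `ε` also `s_ε`, in a strip `[0, T']` with `T' < T`.
Comparing instead with the value at `(x_ε, t_ε, x_ε - ζ_ε, t_ε)` bounds `|x_ε - y_ε - ζ_ε|² / (2ε)`
by `v(x_ε - ζ_ε, t_ε) - v(y_ε, s_ε)`, which tends to `0` because `v`, continuous and constant
outside a ball, is uniformly continuous on `ℝⁿ × [0, T']`.
-/

open Set Filter Topology

noncomputable section

namespace Paper

theorem _root_.UniformContinuousOn.tendsto_dist_comp {α β ι : Type*} [PseudoMetricSpace α]
    [PseudoMetricSpace β] {f : α → β} {s : Set α} (hf : UniformContinuousOn f s)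
    {l : Filter ι} {p q : ι → α} (hp : ∀ᶠ i in l, p i ∈ s) (hq : ∀ᶠ i in l, q i ∈ s)
    (hpq : Tendsto (fun i => dist (p i) (q i)) l (𝓝 0)) :
    Tendsto (fun i => dist (f (p i)) (f (q i))) l (𝓝 0) := by
  rw [← tendsto_uniformity_iff_dist_tendsto_zero (f := fun i => (p i, q i))] at hpq
  rw [← tendsto_uniformity_iff_dist_tendsto_zero (f := fun i => (f (p i), f (q i)))]
  exact Tendsto.comp hf (tendsto_inf.2 ⟨hpq, tendsto_principal.2 (hp.and hq)⟩)

theorem uniformContinuousOn_prod_of_eq_const_of_le_norm {E F β : Type*}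
    [NormedAddCommGroup E] [ProperSpace E] [PseudoMetricSpace F] [PseudoMetricSpace β]
    {f : E × F → β} {S K : Set F} {R : ℝ} {c : β} (hf : ContinuousOn f (univ ×ˢ S))
    (hK : IsCompact K) (hKS : K ⊆ S) (hc : ∀ x, ∀ t ∈ S, R ≤ ‖x‖ → f (x, t) = c) :
    UniformContinuousOn f (univ ×ˢ K) := by
  have hball : UniformContinuousOn f (Metric.closedBall 0 (R + 1) ×ˢ K) :=
    ((isCompact_closedBall _ _).prod hK).uniformContinuousOn_of_continuous
      (hf.mono (prod_mono (subset_univ _) hKS))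
  rw [Metric.uniformContinuousOn_iff] at hball ⊢
  intro δ hδ
  obtain ⟨θ, hθ, hball⟩ := hball δ hδ
  -- Two points closer than `1` that are not both in the ball of radius `R + 1` both lie where
  -- `f = c`.
  refine ⟨min θ 1, by positivity, ?_⟩
  rintro ⟨x, t⟩ ⟨-, ht⟩ ⟨y, s⟩ ⟨-, hs⟩ hd
  by_cases hxy : ‖x‖ ≤ R + 1 ∧ ‖y‖ ≤ R + 1
  · exact hball _ ⟨mem_closedBall_zero_iff.2 hxy.1, ht⟩ _ ⟨mem_closedBall_zero_iff.2 hxy.2, hs⟩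
      (hd.trans_le (min_le_left _ _))
  · have hnear : dist x y < 1 :=
      (le_max_left _ _ : dist x y ≤ dist (x, t) (y, s)).trans_lt (hd.trans_le (min_le_right _ _))
    have hnorm := abs_lt.1 ((abs_norm_sub_norm_le x y).trans_lt (dist_eq_norm x y ▸ hnear))
    have hR : R ≤ ‖x‖ ∧ R ≤ ‖y‖ := by
      rw [not_and_or, not_le, not_le] at hxy
      constructor <;> rcases hxy with h | h <;> linarith [hnorm.1, hnorm.2]
    rwa [hc x t (hKS ht) hR.1, hc y s (hKS hs) hR.2, dist_self]

theorem tendsto_sqrt_const_mul_nhdsGT_zero (M : ℝ) :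
    Tendsto (fun ε => √(M * ε)) (𝓝[>] 0) (𝓝 0) := by
  have : Continuous (fun ε => √(M * ε)) := by fun_prop
  simpa using (this.tendsto 0).mono_left nhdsWithin_le_nhds

theorem sq_div_two_mul_le_of_le_sqrt {r m ε : ℝ} (hr : 0 ≤ r) (hm : 0 ≤ m) (hε : 0 < ε)
    (h : r ≤ √(m * ε)) : r ^ 2 / (2 * ε) ≤ m / 2 := by
  have : r ^ 2 ≤ m * ε := (Real.le_sqrt hr (by positivity)).1 h
  rw [div_le_div_iff₀ (by positivity) two_pos]
  nlinarith

theorem bounds_of_penalties_le {p q μ T t D ε : ℝ} (hε : 0 < ε) (hμ : 0 < μ) (ht : t < T)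
    (h : p ^ 2 / (2 * ε) + q ^ 2 / (2 * ε) + μ / (T - t) ≤ D) :
    |p| ≤ √(2 * D * ε) ∧ |q| ≤ √(2 * D * ε) ∧ 0 < D ∧ t ≤ T - μ / D := by
  have hsqrt (r : ℝ) (hr : r ^ 2 / (2 * ε) ≤ D) : |r| ≤ √(2 * D * ε) :=
    Real.abs_le_sqrt (by rw [div_le_iff₀ (by positivity)] at hr; linarith)
  have hp : 0 ≤ p ^ 2 / (2 * ε) := by positivity
  have hq : 0 ≤ q ^ 2 / (2 * ε) := by positivity
  have hμT : 0 < μ / (T - t) := div_pos hμ (sub_pos.2 ht)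
  have hT : μ / (T - t) ≤ D := by linarith
  have hD : 0 < D := hμT.trans_le hT
  refine ⟨hsqrt p (by linarith), hsqrt q (by linarith), hD, ?_⟩
  rw [div_le_iff₀ (sub_pos.2 ht)] at hT
  rw [le_sub_comm, div_le_iff₀ hD]
  linarith

theorem eventually_mem_Icc_sub_half {ι : Type*} {l : Filter ι} {t s ρ : ι → ℝ} {T τ : ℝ}
    (hτ : 0 < τ) (hρ : Tendsto ρ l (𝓝 0)) (ht : ∀ᶠ i in l, t i ∈ Icc 0 (T - τ))
    (hs : ∀ᶠ i in l, 0 ≤ s i) (hts : ∀ᶠ i in l, |t i - s i| ≤ ρ i) :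
    ∀ᶠ i in l, t i ∈ Icc 0 (T - τ / 2) ∧ s i ∈ Icc 0 (T - τ / 2) := by
  filter_upwards [ht, hs, hts, hρ.eventually (ge_mem_nhds (half_pos hτ))] with i ht hs hts hρ
  exact ⟨⟨ht.1, by linarith [ht.2]⟩, ⟨hs, by linarith [ht.2, (abs_sub_le_iff.1 hts).2]⟩⟩

section DoublingFn

variable {E : Type*} [NormedAddCommGroup E] {u v : E → ℝ → ℝ} {μ T ε : ℝ} {ζ x y x₀ : E}
  {t s : ℝ}

def doublingFn (u v : E → ℝ → ℝ) (μ T ε : ℝ) (ζ x : E) (t : ℝ) (y : E) (s : ℝ) : ℝ :=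
  u x t - v y s - ‖x - y - ζ‖ ^ 2 / (2 * ε) - |t - s| ^ 2 / (2 * ε) - μ / (T - t)

theorem bounds_of_doublingFn_le {Cu Cv m D : ℝ} (hε : 0 < ε) (hμ : 0 < μ) (hm : 0 ≤ m)
    (ht : t < T) (hζ : ‖ζ‖ ≤ √(m * ε)) (hu : u x t ≤ Cu) (hv : -Cv ≤ v y s)
    (hD : Cu + Cv - (u x₀ 0 - v x₀ 0) + m / 2 + μ / T ≤ D)
    (h : doublingFn u v μ T ε ζ x₀ 0 x₀ 0 ≤ doublingFn u v μ T ε ζ x t y s) :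
    ‖x - y - ζ‖ ≤ √(2 * D * ε) ∧ |t - s| ≤ √(2 * D * ε) ∧ 0 < D ∧ t ≤ T - μ / D := by
  simp only [doublingFn, sub_self, zero_sub, norm_neg, abs_zero, sub_zero, ne_eq,
    OfNat.ofNat_ne_zero, not_false_eq_true, zero_pow, zero_div] at h
  simpa using bounds_of_penalties_le (p := ‖x - y - ζ‖) (q := |t - s|) (D := D) hε hμ ht
    (by linarith [sq_div_two_mul_le_of_le_sqrt (norm_nonneg _) hm hε hζ])

theorem sq_norm_sub_sub_div_le_of_doublingFn_le (hε : 0 ≤ ε)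
    (h : doublingFn u v μ T ε ζ x t (x - ζ) t ≤ doublingFn u v μ T ε ζ x t y s) :
    ‖x - y - ζ‖ ^ 2 / (2 * ε) ≤ v (x - ζ) t - v y s := by
  simp only [doublingFn, sub_sub_cancel, sub_self, norm_zero, ne_eq, OfNat.ofNat_ne_zero,
    not_false_eq_true, zero_pow, zero_div, abs_zero, sub_zero] at h
  have : 0 ≤ |t - s| ^ 2 / (2 * ε) := by positivity
  linarith

end DoublingFn

theorem tendsto_sq_norm_sub_div_of_le_oscillation {E : Type*} [NormedAddCommGroup E]
    {v : E → ℝ → ℝ} {K : Set ℝ} (hv : UniformContinuousOn (fun q : E × ℝ => v q.1 q.2) (univ ×ˢ K))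
    {x y : ℝ → E} {t s : ℝ → ℝ} {M : ℝ} (hK : ∀ᶠ ε in 𝓝[>] 0, t ε ∈ K ∧ s ε ∈ K)
    (hosc : ∀ᶠ ε in 𝓝[>] 0, ‖x ε - y ε‖ ^ 2 / (2 * ε) ≤ v (x ε) (t ε) - v (y ε) (s ε))
    (hM : ∀ᶠ ε in 𝓝[>] 0, ‖x ε - y ε‖ ≤ √(M * ε) ∧ |t ε - s ε| ≤ √(M * ε)) :
    Tendsto (fun ε => ‖x ε - y ε‖ ^ 2 / ε) (𝓝[>] 0) (𝓝 0) := by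
  have hdist : Tendsto (fun ε => dist (x ε, t ε) (y ε, s ε)) (𝓝[>] 0) (𝓝 0) :=
    squeeze_zero' (Eventually.of_forall fun _ => dist_nonneg)
      (hM.mono fun ε h => by rw [Prod.dist_eq, dist_eq_norm, Real.dist_eq]; exact max_le h.1 h.2)
      (tendsto_sqrt_const_mul_nhdsGT_zero M)
  have hv_dist := hv.tendsto_dist_comp (hK.mono fun _ h => ⟨mem_univ _, h.1⟩)
    (hK.mono fun _ h => ⟨mem_univ _, h.2⟩) hdist
  refine squeeze_zero' (eventually_mem_nhdsWithin.mono fun ε (hε : 0 < ε) => by positivity)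
    ((hosc.and eventually_mem_nhdsWithin).mono fun ε ⟨h, (hε : 0 < ε)⟩ => ?_)
    (by simpa using hv_dist.const_mul 2)
  calc ‖x ε - y ε‖ ^ 2 / ε = 2 * (‖x ε - y ε‖ ^ 2 / (2 * ε)) := by field_simp
    _ ≤ 2 * dist (v (x ε) (t ε)) (v (y ε) (s ε)) := by
      rw [Real.dist_eq]; gcongr; exact h.trans (le_abs_self _)

theorem doubling_variable_estimates_general
    {n : ℕ} (T : ℝ) (hT : 0 < T)
    (u v : E n → ℝ → ℝ)
    (hu_bdd : ∃ C, ∀ x : E n, ∀ t ∈ Ico (0:ℝ) T, |u x t| ≤ C)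
    (hv_cont : ContinuousOn (fun q : E n × ℝ => v q.1 q.2) (univ ×ˢ Ico 0 T))
    (hv_bdd : ∃ C, ∀ x : E n, ∀ t ∈ Ico (0:ℝ) T, |v x t| ≤ C)
    (R : ℝ) (b : ℝ)
    (hvb : ∀ x : E n, ∀ t ∈ Ico (0:ℝ) T, R ≤ ‖x‖ → v x t = b)
    (μ : ℝ) (hμ : 0 < μ)
    (m₀ : ℝ)
    (hm₀pos : 0 < m₀)
    (ε₀ : ℝ) (hε₀ : 0 < ε₀)
    (ζ : ℝ → E n) (X Y : ℝ → E n) (tt ss : ℝ → ℝ)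
    (hζ : ∀ ε ∈ Ioo (0:ℝ) ε₀, ‖ζ ε‖ ≤ Real.sqrt (m₀ * ε))
    (hmem : ∀ ε ∈ Ioo (0:ℝ) ε₀, tt ε ∈ Ico (0:ℝ) T ∧ ss ε ∈ Ico (0:ℝ) T)
    (hmax : ∀ ε ∈ Ioo (0:ℝ) ε₀, ∀ x y : E n, ∀ t ∈ Ico (0:ℝ) T, ∀ s ∈ Ico (0:ℝ) T,
      u x t - v y s - ‖x - y - ζ ε‖ ^ 2 / (2 * ε) - |t - s| ^ 2 / (2 * ε) - μ / (T - t) ≤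
        u (X ε) (tt ε) - v (Y ε) (ss ε) - ‖X ε - Y ε - ζ ε‖ ^ 2 / (2 * ε)
          - |tt ε - ss ε| ^ 2 / (2 * ε) - μ / (T - tt ε)) :
    (∃ M : ℝ, ∀ ε ∈ Ioo (0:ℝ) ε₀,
        ‖X ε - Y ε - ζ ε‖ ≤ Real.sqrt (M * ε) ∧ |tt ε - ss ε| ≤ Real.sqrt (M * ε)) ∧
      Tendsto (fun ε => ‖X ε - Y ε - ζ ε‖ ^ 2 / ε) (𝓝[>] 0) (𝓝 0) := by
  obtain ⟨Cu, hCu⟩ := hu_bdd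
  obtain ⟨Cv, hCv⟩ := hv_bdd
  have h0 : (0 : ℝ) ∈ Ico 0 T := ⟨le_rfl, hT⟩
  set D := Cu + Cv - (u 0 0 - v 0 0) + m₀ / 2 + μ / T
  have hbounds (ε : ℝ) (hε : ε ∈ Ioo 0 ε₀) : ‖X ε - Y ε - ζ ε‖ ≤ √(2 * D * ε) ∧
      |tt ε - ss ε| ≤ √(2 * D * ε) ∧ 0 < D ∧ tt ε ≤ T - μ / D :=
    bounds_of_doublingFn_le hε.1 hμ hm₀pos.le (hmem ε hε).1.2 (hζ ε hε)
      (abs_le.1 (hCu _ _ (hmem ε hε).1)).2 (abs_le.1 (hCv _ _ (hmem ε hε).2)).1 le_rfl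
      (hmax ε hε 0 0 0 h0 0 h0)
  have hD : 0 < D := (hbounds (ε₀ / 2) ⟨by positivity, by linarith⟩).2.2.1
  have hsmall : ∀ᶠ ε in 𝓝[>] 0, ε ∈ Ioo 0 ε₀ := Ioo_mem_nhdsGT hε₀
  have hstrip := eventually_mem_Icc_sub_half (div_pos hμ hD) (tendsto_sqrt_const_mul_nhdsGT_zero _)
    (hsmall.mono fun ε hε => ⟨(hmem ε hε).1.1, (hbounds ε hε).2.2.2⟩)
    (hsmall.mono fun ε hε => (hmem ε hε).2.1) (hsmall.mono fun ε hε => (hbounds ε hε).2.1)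
  have hv_unif := uniformContinuousOn_prod_of_eq_const_of_le_norm hv_cont isCompact_Icc
    (Icc_subset_Ico_right (sub_lt_self T (half_pos (div_pos hμ hD)))) hvb
  refine ⟨⟨2 * D, fun ε hε => ⟨(hbounds ε hε).1, (hbounds ε hε).2.1⟩⟩,
    (tendsto_sq_norm_sub_div_of_le_oscillation (x := fun ε => X ε - ζ ε) (y := Y) (M := 2 * D)
      hv_unif hstrip ?_ ?_).congr fun ε => by rw [sub_right_comm]⟩
  · refine hsmall.mono fun ε hε => ?_
    rw [sub_right_comm]
    exact sq_norm_sub_sub_div_le_of_doublingFn_le hε.1.le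
      (hmax ε hε (X ε) (X ε - ζ ε) (tt ε) (hmem ε hε).1 (tt ε) (hmem ε hε).1)
  · refine hsmall.mono fun ε hε => ?_
    rw [sub_right_comm]
    exact ⟨(hbounds ε hε).1, (hbounds ε hε).2.1⟩

/-- Proposition 3.2 of the paper: doubling-variable estimates with
shifted penalization.  `Ψ_{ζ,ε}(x,t,y,s) = u(x,t) - v(y,s) - |x-y-ζ|²/(2ε) - |t-s|²/(2ε)
- μ/(T-t)`; `(X ε, tt ε, Y ε, ss ε)` is a given global maximum point of `Ψ_{ζ ε, ε}`
over `Q × Q`, for each `ε ∈ (0, ε₀)`. -/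
theorem doubling_variable_estimates
    {n : ℕ} (hn : 1 ≤ n) (T : ℝ) (hT : 0 < T)
    (u v : E n → ℝ → ℝ)
    (hu_usc : UpperSemicontinuousOn (fun q : E n × ℝ => u q.1 q.2) (univ ×ˢ Ico 0 T))
    (hu_bdd : ∃ C, ∀ x : E n, ∀ t ∈ Ico (0:ℝ) T, |u x t| ≤ C)
    (hv_cont : ContinuousOn (fun q : E n × ℝ => v q.1 q.2) (univ ×ˢ Ico 0 T))
    (hv_bdd : ∃ C, ∀ x : E n, ∀ t ∈ Ico (0:ℝ) T, |v x t| ≤ C)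
    (R : ℝ) (hR : 0 < R) (a b : ℝ) (hab : a ≤ b)
    (hua : ∀ x : E n, ∀ t ∈ Ico (0:ℝ) T, R ≤ ‖x‖ → u x t = a)
    (hvb : ∀ x : E n, ∀ t ∈ Ico (0:ℝ) T, R ≤ ‖x‖ → v x t = b)
    (hinit : ∀ x, u x 0 ≤ v x 0)
    (μ : ℝ) (hμ : 0 < μ)
    (m₀ : ℝ)
    (hm₀ : m₀ = sSup {r : ℝ | ∃ x : E n, ∃ t ∈ Ico (0:ℝ) T,
      r = u x t - v x t - μ / (T - t)})
    (hm₀pos : 0 < m₀)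
    (ε₀ : ℝ) (hε₀ : 0 < ε₀)
    (ζ : ℝ → E n) (X Y : ℝ → E n) (tt ss : ℝ → ℝ)
    (hζ : ∀ ε ∈ Ioo (0:ℝ) ε₀, ‖ζ ε‖ ≤ Real.sqrt (m₀ * ε))
    (hmem : ∀ ε ∈ Ioo (0:ℝ) ε₀, tt ε ∈ Ico (0:ℝ) T ∧ ss ε ∈ Ico (0:ℝ) T)
    (hmax : ∀ ε ∈ Ioo (0:ℝ) ε₀, ∀ x y : E n, ∀ t ∈ Ico (0:ℝ) T, ∀ s ∈ Ico (0:ℝ) T,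
      u x t - v y s - ‖x - y - ζ ε‖ ^ 2 / (2 * ε) - |t - s| ^ 2 / (2 * ε) - μ / (T - t) ≤
        u (X ε) (tt ε) - v (Y ε) (ss ε) - ‖X ε - Y ε - ζ ε‖ ^ 2 / (2 * ε)
          - |tt ε - ss ε| ^ 2 / (2 * ε) - μ / (T - tt ε)) :
    (∃ M : ℝ, ∀ ε ∈ Ioo (0:ℝ) ε₀,
        ‖X ε - Y ε - ζ ε‖ ≤ Real.sqrt (M * ε) ∧ |tt ε - ss ε| ≤ Real.sqrt (M * ε)) ∧
      Tendsto (fun ε => ‖X ε - Y ε - ζ ε‖ ^ 2 / ε) (𝓝[>] 0) (𝓝 0) :=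
  doubling_variable_estimates_general T hT u v hu_bdd hv_cont hv_bdd R b hvb μ hμ m₀ hm₀pos ε₀ hε₀ ζ
    X Y tt ss hζ hmem hmax

end Paper
end
end

section
/- Chord inequality for the driven 1D facet construction: Let f : ℝ → ℝ be continuous, even (f(x) = f(−x)), nonnegative, and non-increasing on [0,∞). Suppose ℓ > 0 satisfies ∫₀^ℓ f(z) dz − ℓ f(ℓ) = 1 (equivalently, f(ℓ) = −1/ℓ + (1/(2ℓ)) ∫_{−ℓ}^{ℓ} f(z) dz). Define Z₊(x) := 1 − ∫₀^x f(z) dz, Z₋(x) := −1 − ∫₀^x f(z) dz, and y(x) := −f(ℓ)·x. Then y(ℓ) = Z₊(ℓ), y(−ℓ) = Z₋(−ℓ), and Z₋(x) ≤ y(x) ≤ Z₊(x) for all x ∈ [−ℓ, ℓ]. -/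
open Set intervalIntegral

/-- the chord inequality for the driven 1D facet construction
(Section 6 of the paper).  With `Z₊(x) = 1 - ∫₀ˣ f`, `Z₋(x) = -1 - ∫₀ˣ f` and the chord
`y(x) = -f(ℓ)·x`, the chord connects `(-ℓ, Z₋(-ℓ))` with `(ℓ, Z₊(ℓ))` and
`Z₋ ≤ y ≤ Z₊` on `[-ℓ, ℓ]`. -/
theorem chord_inequality
    (f : ℝ → ℝ) (hcont : Continuous f) (heven : ∀ x, f (-x) = f x)
    (hnonneg : ∀ x, 0 ≤ f x) (hmono : AntitoneOn f (Ici (0:ℝ)))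
    (ℓ : ℝ) (hℓ : 0 < ℓ)
    (heq : (∫ z in (0:ℝ)..ℓ, f z) - ℓ * f ℓ = 1) :
    (-f ℓ * ℓ = 1 - ∫ z in (0:ℝ)..ℓ, f z) ∧
    (-f ℓ * (-ℓ) = -1 - ∫ z in (0:ℝ)..(-ℓ), f z) ∧
    (∀ x ∈ Icc (-ℓ) ℓ,
      -1 - (∫ z in (0:ℝ)..x, f z) ≤ -f ℓ * x ∧
      -f ℓ * x ≤ 1 - ∫ z in (0:ℝ)..x, f z) := by
  have hint : ∀ a b : ℝ, IntervalIntegrable f MeasureTheory.volume a b :=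
    fun a b => hcont.intervalIntegrable a b
  have hsymm : (∫ z in (0:ℝ)..(-ℓ), f z) = -(∫ z in (0:ℝ)..ℓ, f z) := by
    have h1 : (∫ z in (0:ℝ)..ℓ, f (-z)) = ∫ z in (-ℓ)..(0:ℝ), f z := by
      simpa using intervalIntegral.integral_comp_neg (a := 0) (b := ℓ) f
    have h2 : (∫ z in (0:ℝ)..ℓ, f (-z)) = ∫ z in (0:ℝ)..ℓ, f z := by
      simp [heven]
    rw [intervalIntegral.integral_symm, ← h1, h2]
  have hfℓ : ∀ z ∈ Icc (-ℓ) ℓ, f ℓ ≤ f z := by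
    intro z hz
    rcases le_or_gt 0 z with hz0 | hz0
    · exact hmono hz0 (le_of_lt hℓ) hz.2
    · have : f z = f (-z) := (heven z).symm
      rw [this]
      exact hmono (by linarith [hz.1] : (0:ℝ) ≤ -z) (le_of_lt hℓ) (by linarith [hz.1])
  -- key integral bound on subintervals of [-ℓ, ℓ]
  have key : ∀ a b : ℝ, -ℓ ≤ a → a ≤ b → b ≤ ℓ →
      f ℓ * (b - a) ≤ ∫ z in a..b, f z := by
    intro a b ha hab hb
    have hmc : (∫ z in a..b, f ℓ) ≤ ∫ z in a..b, f z := by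
      apply intervalIntegral.integral_mono_on hab (intervalIntegrable_const) (hint a b)
      intro z hz
      exact hfℓ z ⟨le_trans ha hz.1, le_trans hz.2 hb⟩
    simpa [mul_comm] using hmc
  have hℓeq : -f ℓ * ℓ = 1 - ∫ z in (0:ℝ)..ℓ, f z := by linarith
  refine ⟨hℓeq, by rw [hsymm]; linarith, ?_⟩
  intro x hx
  have hsplit1 : (∫ z in (0:ℝ)..x, f z) + (∫ z in x..ℓ, f z) = ∫ z in (0:ℝ)..ℓ, f z :=
    intervalIntegral.integral_add_adjacent_intervals (hint 0 x) (hint x ℓ)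
  have hsplit2 : (∫ z in (0:ℝ)..(-ℓ), f z) + (∫ z in (-ℓ)..x, f z) = ∫ z in (0:ℝ)..x, f z :=
    intervalIntegral.integral_add_adjacent_intervals (hint 0 (-ℓ)) (hint (-ℓ) x)
  have k1 := key x ℓ hx.1 hx.2 le_rfl
  have k2 := key (-ℓ) x le_rfl hx.1 hx.2
  constructor
  · -- lower bound
    rw [hsymm] at hsplit2
    nlinarith [k2]
  · nlinarith [k1]
end
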